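/- Let A be an associative ring with identity and P a finitely generated projective left A-module; set Q = P ⊕ A. If Δ ∈ Aut(Q) satisfies Δ(0,1) = (0,1), then Δ factors as Δ = τ·(β ⊕ 1) with τ ∈ ETrans(Q) and β ∈ Aut(P); in particular Δ ∈ Trans(Q)·(Aut(P) ⊕ 1). -/

import Mathlib

/-!
Fixing `(0, 1)` forces `Δ` to be block lower triangular, `Δ (p, a) = (β p, a + ψ p)`, and `β`
is invertible with inverse the corresponding block of `Δ⁻¹`. Such a map is the elementary
transvection `(p, a) ↦ (p, a + ψ (β⁻¹ p))` composed with `β ⊕ 1`, and that transvection is the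
transvection of `P ⊕ A` along the unimodular element `(0, 1)`.
-/

open scoped Pointwise

/-- An element `q` of a left `A`-module `M` is unimodular if `Aq ≅ A` and `Aq` is a
direct summand of `M`; equivalently there is a functional `φ : M → A` with `φ q = 1`. -/
def IsUnimodular (A : Type*) [Ring A] {M : Type*} [AddCommGroup M] [Module A M]
    (q : M) : Prop :=
  ∃ φ : M →ₗ[A] A, φ q = 1

/-- The set of elementary transvections of `M ⊕ A`: the automorphisms
`(p, a) ↦ (p + a • x, a)` for `x : M`, and `(p, a) ↦ (p, a + ψ p)` for `ψ : M → A`. -/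
def elemTransvectionSet (A : Type*) [Ring A] (M : Type*) [AddCommGroup M]
    [Module A M] : Set ((M × A) ≃ₗ[A] (M × A)) :=
  {τ | (∃ x : M, ∀ p : M × A, τ p = (p.1 + p.2 • x, p.2)) ∨
       (∃ ψ : M →ₗ[A] A, ∀ p : M × A, τ p = (p.1, p.2 + ψ p.1))}

/-- The elementary transvection subgroup `ETrans(M ⊕ A)`. -/
def ETrans (A : Type*) [Ring A] (M : Type*) [AddCommGroup M] [Module A M] :
    Subgroup ((M × A) ≃ₗ[A] (M × A)) :=
  Subgroup.closure (elemTransvectionSet A M)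

/-- The set of transvections of a module `M`: automorphisms `p ↦ p + φ(p) • q` with
`φ q = 0` and `q` unimodular in `M` or `φ` unimodular in `M*`. -/
def transvectionSet (A : Type*) [Ring A] (M : Type*) [AddCommGroup M] [Module A M] :
    Set (M ≃ₗ[A] M) :=
  {τ | ∃ (q : M) (φ : M →ₗ[A] A), φ q = 0 ∧
        (IsUnimodular A q ∨ ∃ x : M, φ x = 1) ∧ ∀ p : M, τ p = p + φ p • q}

/-- The transvection subgroup `Trans(M)` of `Aut(M)`. -/
def TransGroup (A : Type*) [Ring A] (M : Type*) [AddCommGroup M] [Module A M] :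
    Subgroup (M ≃ₗ[A] M) :=
  Subgroup.closure (transvectionSet A M)

namespace LinearEquiv

theorem skewProd_eq_prodCongr_trans {R M M₂ M₃ M₄ : Type*} [Semiring R]
    [AddCommMonoid M] [AddCommMonoid M₂] [AddCommMonoid M₃] [AddCommGroup M₄]
    [Module R M] [Module R M₂] [Module R M₃] [Module R M₄]
    (e₁ : M ≃ₗ[R] M₂) (e₂ : M₃ ≃ₗ[R] M₄) (f : M →ₗ[R] M₄) :
    e₁.skewProd e₂ f =
      (e₁.prodCongr e₂).trans ((refl R M₂).skewProd (refl R M₄) (f ∘ₗ e₁.symm)) := by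
  ext x <;> simp

end LinearEquiv

section FixesUnimodular

variable {A : Type*} [Ring A] {M : Type*} [AddCommGroup M] [Module A M]

theorem skewProd_refl_mem_ETrans (ψ : M →ₗ[A] A) :
    (LinearEquiv.refl A M).skewProd (LinearEquiv.refl A A) ψ ∈ ETrans A M :=
  Subgroup.subset_closure (Or.inr ⟨ψ, fun _ => rfl⟩)

theorem skewProd_refl_mem_TransGroup (ψ : M →ₗ[A] A) :
    (LinearEquiv.refl A M).skewProd (LinearEquiv.refl A A) ψ ∈ TransGroup A (M × A) := by
  refine Subgroup.subset_closure ⟨(0, 1), ψ ∘ₗ LinearMap.fst A M A, by simp,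
    Or.inl ⟨LinearMap.snd A M A, rfl⟩, fun p => ?_⟩
  ext <;> simp

variable {Δ : (M × A) ≃ₗ[A] (M × A)}

theorem apply_eq_of_apply_zero_one (hΔ : Δ (0, 1) = (0, 1)) (p : M) (a : A) :
    Δ (p, a) = ((Δ (p, 0)).1, a + (Δ (p, 0)).2) := by
  calc Δ (p, a) = Δ (p, 0) + a • Δ (0, 1) := by rw [← map_smul, ← map_add]; simp
    _ = _ := by rw [hΔ]; ext <;> simp [add_comm]

theorem symm_apply_zero_one (hΔ : Δ (0, 1) = (0, 1)) : Δ.symm (0, 1) = (0, 1) :=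
  Δ.symm_apply_eq.mpr hΔ.symm

theorem fst_apply_inl_fst (hΔ : Δ (0, 1) = (0, 1)) (x : M × A) : (Δ (x.1, 0)).1 = (Δ x).1 := by
  obtain ⟨p, a⟩ := x
  rw [apply_eq_of_apply_zero_one hΔ p a]

def cornerEquiv (Δ : (M × A) ≃ₗ[A] (M × A)) (hΔ : Δ (0, 1) = (0, 1)) : M ≃ₗ[A] M :=
  LinearEquiv.ofLinearMap
    (LinearMap.fst A M A ∘ₗ Δ.toLinearMap ∘ₗ LinearMap.inl A M A)
    (LinearMap.fst A M A ∘ₗ Δ.symm.toLinearMap ∘ₗ LinearMap.inl A M A)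
    (LinearMap.ext fun p => (fst_apply_inl_fst hΔ _).trans
      (congrArg Prod.fst (Δ.apply_symm_apply (p, 0))))
    (LinearMap.ext fun p => (fst_apply_inl_fst (symm_apply_zero_one hΔ) _).trans
      (congrArg Prod.fst (Δ.symm_apply_apply (p, 0))))

theorem eq_skewProd_cornerEquiv (hΔ : Δ (0, 1) = (0, 1)) :
    Δ = (cornerEquiv Δ hΔ).skewProd (LinearEquiv.refl A A)
      (LinearMap.snd A M A ∘ₗ Δ.toLinearMap ∘ₗ LinearMap.inl A M A) := by
  ext ⟨p, a⟩ <;> simp [apply_eq_of_apply_zero_one hΔ p a, cornerEquiv]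

end FixesUnimodular

theorem factor_of_fixes_unimodular_general
    (A : Type*) [Ring A] (P : Type*) [AddCommGroup P] [Module A P]
    (Δ : (P × A) ≃ₗ[A] (P × A)) (hΔ : Δ ((0 : P), (1 : A)) = ((0 : P), (1 : A))) :
    ∃ τ ∈ ETrans A P, ∃ β : P ≃ₗ[A] P,
      (Δ = τ * (β.prodCongr (LinearEquiv.refl A A)) ∧
        Δ ∈ (TransGroup A (P × A) : Set ((P × A) ≃ₗ[A] (P × A))) *
          ((fun β : P ≃ₗ[A] P => β.prodCongr (LinearEquiv.refl A A)) '' Set.univ)) := by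
  obtain ⟨β, ψ, rfl⟩ : ∃ (β : P ≃ₗ[A] P) (ψ : P →ₗ[A] A),
      Δ = β.skewProd (LinearEquiv.refl A A) ψ :=
    ⟨_, _, eq_skewProd_cornerEquiv hΔ⟩
  rw [LinearEquiv.skewProd_eq_prodCongr_trans, ← LinearEquiv.mul_eq_trans]
  exact ⟨_, skewProd_refl_mem_ETrans _, β, rfl,
    Set.mul_mem_mul (skewProd_refl_mem_TransGroup _) ⟨β, trivial, rfl⟩⟩

/-- If an automorphism `Δ` of `Q = P ⊕ A` fixes the unimodular element `(0, 1)`,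
then `Δ = τ · (β ⊕ 1)` with `τ` in the elementary transvection subgroup `ETrans(Q)`
and `β ∈ Aut(P)`; in particular `Δ ∈ Trans(Q) · (Aut(P) ⊕ 1)`. -/
theorem factor_of_fixes_unimodular
    (A : Type*) [Ring A] (P : Type*) [AddCommGroup P] [Module A P]
    [Module.Finite A P] [Module.Projective A P]
    (Δ : (P × A) ≃ₗ[A] (P × A)) (hΔ : Δ ((0 : P), (1 : A)) = ((0 : P), (1 : A))) :
    ∃ τ ∈ ETrans A P, ∃ β : P ≃ₗ[A] P,
      (Δ = τ * (β.prodCongr (LinearEquiv.refl A A)) ∧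
        Δ ∈ (TransGroup A (P × A) : Set ((P × A) ≃ₗ[A] (P × A))) *
          ((fun β : P ≃ₗ[A] P => β.prodCongr (LinearEquiv.refl A A)) '' Set.univ)) :=
  factor_of_fixes_unimodular_general A P Δ hΔ
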